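/- arXiv:1906.02551 — 2 statements merged into one kernel-verified Lean document; each statement's English description precedes it below -/
import Mathlib

section
/- Let K(t) = t^{H-1/2} e^{-λt} with H ∈ (0,1) and λ > 0 (the Gamma kernel). Then K ∈ L²_loc(ℝ₊) and for every T ≥ 0, ∫₀ʰ K(t)² dt = O(h^{2H}) and ∫₀ᵀ |K(t+h) − K(t)| dt = O(h^{min(2H,1)}) as h → 0⁺. -/
open MeasureTheory Filter Topology Asymptotics Set

private lemma aux_rpow_O {c m : ℝ} (hc : m ≤ c) (hm : 0 < m) :
    (fun h : ℝ => h ^ c) =O[𝓝[>] (0:ℝ)] fun h : ℝ => h ^ m := by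
  refine IsBigO.of_bound 1 ?_
  filter_upwards [Ioo_mem_nhdsGT_of_mem (by norm_num : (0:ℝ) ∈ Ico (0:ℝ) 1)] with h hh
  have h0 : 0 < h := hh.1
  have h1 : h ≤ 1 := hh.2.le
  have hle : h ^ c ≤ h ^ m := Real.rpow_le_rpow_of_exponent_ge h0 h1 hc
  rw [Real.norm_of_nonneg (Real.rpow_nonneg h0.le _),
    Real.norm_of_nonneg (Real.rpow_nonneg h0.le _)]
  linarith

private lemma aux_lin_O {m : ℝ} (hm1 : m ≤ 1) (hm : 0 < m) :
    (fun h : ℝ => h) =O[𝓝[>] (0:ℝ)] fun h : ℝ => h ^ m :=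
  (aux_rpow_O hm1 hm).congr_left fun h => by rw [Real.rpow_one]

/-- Gamma kernel `K(t) = t^(H-1/2) e^{-λ t}`, `H ∈ (0,1)`, `λ > 0`: it is locally square
integrable on `[0,∞)`, `∫₀ʰ K² = O(h^{2H})`, and
`∫₀ᵀ |K(t+h) - K(t)| dt = O(h^{min(2H,1)})` as `h → 0⁺`. -/
theorem gamma_kernel_regularity
    (H lam : ℝ) (hH : H ∈ Set.Ioo (0:ℝ) 1) (hlam : 0 < lam)
    (K : ℝ → ℝ) (hK : ∀ t : ℝ, K t = t ^ (H - 1/2) * Real.exp (-lam * t)) :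
    (∀ a : ℝ, 0 ≤ a → IntervalIntegrable (fun t => (K t) ^ 2) volume 0 a) ∧
    ((fun h : ℝ => ∫ t in (0:ℝ)..h, (K t) ^ 2) =O[𝓝[>] (0:ℝ)]
      fun h : ℝ => h ^ (2 * H)) ∧
    (∀ T : ℝ, 0 ≤ T →
      (fun h : ℝ => ∫ t in (0:ℝ)..T, |K (t + h) - K t|) =O[𝓝[>] (0:ℝ)]
        fun h : ℝ => h ^ (min (2 * H) 1)) := by
  obtain ⟨hH0, hH1⟩ := hH
  set α := H - 1/2 with hα
  have hα1 : (-1:ℝ) < α := by rw [hα]; linarith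
  have h2H : (-1:ℝ) < 2*H - 1 := by linarith
  have hKfun : K = fun t => t ^ α * Real.exp (-lam * t) := funext hK
  have hKmeas : Measurable K := by
    rw [hKfun]; fun_prop
  -- pointwise bound for K²
  have hKsq : ∀ x : ℝ, 0 ≤ x → K x ^ 2 ≤ x ^ (2*H - 1) := by
    intro x hx
    rw [hK x]
    have h1 : x ^ (2*H-1) = (x ^ α) ^ 2 := by
      rw [show (2*H - 1 : ℝ) = α * (2:ℕ) by rw [hα]; push_cast; ring,
        Real.rpow_mul hx, Real.rpow_natCast]
    rw [h1, mul_pow]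
    have he : Real.exp (-lam * x) ≤ 1 := Real.exp_le_one_iff.mpr (by nlinarith)
    have he0 : 0 < Real.exp (-lam * x) := Real.exp_pos _
    have he2 : Real.exp (-lam * x) ^ 2 ≤ 1 := by nlinarith
    nlinarith [sq_nonneg (x ^ α)]
  -- Part 1
  have part1 : ∀ a : ℝ, 0 ≤ a → IntervalIntegrable (fun t => (K t) ^ 2) volume 0 a := by
    intro a ha
    have hg : IntervalIntegrable (fun t : ℝ => t ^ (2*H - 1)) volume 0 a :=
      intervalIntegral.intervalIntegrable_rpow' h2H
    refine hg.mono_fun ((hKmeas.pow_const 2).aestronglyMeasurable.restrict) ?_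
    refine (ae_restrict_iff' measurableSet_uIoc).mpr (Eventually.of_forall fun t ht => ?_)
    rw [Set.uIoc_of_le ha] at ht
    have ht0 : 0 < t := ht.1
    show ‖K t ^ 2‖ ≤ ‖t ^ (2*H - 1)‖
    rw [Real.norm_of_nonneg (sq_nonneg _),
      Real.norm_of_nonneg (Real.rpow_nonneg ht0.le _)]
    exact hKsq t ht0.le
  refine ⟨part1, ?_, ?_⟩
  -- Part 2
  · refine IsBigO.of_bound (1/(2*H)) ?_
    filter_upwards [self_mem_nhdsWithin] with h hh
    have hh : 0 < h := hh
    have hint := part1 h hh.le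
    have hg : IntervalIntegrable (fun t : ℝ => t ^ (2*H - 1)) volume 0 h :=
      intervalIntegral.intervalIntegrable_rpow' h2H
    have hmono : (∫ t in (0:ℝ)..h, (K t) ^ 2) ≤ ∫ t in (0:ℝ)..h, t ^ (2*H-1) :=
      intervalIntegral.integral_mono_on hh.le hint hg (fun x hx => hKsq x hx.1)
    have hval : (∫ t in (0:ℝ)..h, t ^ (2*H-1)) = h ^ (2*H) / (2*H) := by
      rw [integral_rpow (Or.inl h2H), show (2*H - 1 + 1 : ℝ) = 2*H by ring,
        Real.zero_rpow (by positivity : (2*H:ℝ) ≠ 0), sub_zero]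
    have hnn : 0 ≤ ∫ t in (0:ℝ)..h, (K t) ^ 2 :=
      intervalIntegral.integral_nonneg hh.le fun x _ => sq_nonneg _
    have hpow : 0 < h ^ (2*H) := Real.rpow_pos_of_pos hh _
    rw [Real.norm_of_nonneg hnn, Real.norm_of_nonneg hpow.le]
    rw [hval] at hmono
    calc (∫ t in (0:ℝ)..h, (K t) ^ 2) ≤ h ^ (2*H) / (2*H) := hmono
      _ = 1/(2*H) * h ^ (2*H) := by ring
  -- Part 3
  · intro T hT
    rcases eq_or_lt_of_le hT with rfl | hT0
    · simp only [intervalIntegral.integral_same]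
      exact isBigO_zero _ _
    set β := H + 1/2 with hβ
    have hβpos : (0:ℝ) < β := by rw [hβ]; linarith
    have hαβ : α + 1 = β := by rw [hα, hβ]; ring
    set m := min (2*H) 1 with hm
    have hmpos : 0 < m := lt_min (by linarith) one_pos
    have hm1 : m ≤ 1 := min_le_right _ _
    have hmβ : m ≤ β := by
      rcases le_total H (1/2) with h | h
      · exact le_trans (min_le_left _ _) (by rw [hβ]; linarith)
      · exact le_trans (min_le_right _ _) (by rw [hβ]; linarith)
    -- key pointwise-in-h bound
    have key : ∀ h : ℝ, 0 < h →
        (∫ t in (0:ℝ)..T, |K (t + h) - K t|)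
          ≤ (|(T+h)^β - T^β| + h^β + lam * T^β * h) / β := by
      intro h hh
      have Iα : IntervalIntegrable (fun t : ℝ => t ^ α) volume 0 T :=
        intervalIntegral.intervalIntegrable_rpow' hα1
      have contαh : ContinuousOn (fun t : ℝ => (t + h) ^ α) (uIcc 0 T) := by
        refine ContinuousOn.rpow_const (by fun_prop) fun x hx => ?_
        rw [uIcc_of_le hT] at hx
        exact Or.inl (by nlinarith [hx.1])
      have Iαh : IntervalIntegrable (fun t : ℝ => (t+h)^α) volume 0 T :=
        contαh.intervalIntegrable
      have IKh : IntervalIntegrable (fun t => K (t+h)) volume 0 T := by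
        simp only [hK]
        exact (contαh.mul (by fun_prop)).intervalIntegrable
      have IK : IntervalIntegrable K volume 0 T := by
        refine Iα.mono_fun (hKmeas.aestronglyMeasurable.restrict) ?_
        refine (ae_restrict_iff' measurableSet_uIoc).mpr (Eventually.of_forall fun t ht => ?_)
        rw [Set.uIoc_of_le hT] at ht
        have ht0 : 0 < t := ht.1
        show ‖K t‖ ≤ ‖t ^ α‖
        rw [hK t, Real.norm_of_nonneg
            (mul_nonneg (Real.rpow_nonneg ht0.le _) (Real.exp_pos _).le),
          Real.norm_of_nonneg (Real.rpow_nonneg ht0.le _)]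
        exact mul_le_of_le_one_right (Real.rpow_nonneg ht0.le _)
          (Real.exp_le_one_iff.mpr (by nlinarith))
      have hpt : ∀ t ∈ Icc (0:ℝ) T, |K (t+h) - K t| ≤ |(t+h)^α - t^α| + lam * h * t^α := by
        intro t ht
        have ht0 : 0 ≤ t := ht.1
        rw [hK, hK]
        have e1 : Real.exp (-lam*(t+h)) ≤ 1 := Real.exp_le_one_iff.mpr (by nlinarith)
        have e1' : 0 < Real.exp (-lam*(t+h)) := Real.exp_pos _
        have e3 : Real.exp (-lam*(t+h)) ≤ Real.exp (-lam*t) :=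
          Real.exp_le_exp.mpr (by nlinarith)
        have e2 : Real.exp (-lam*t) - Real.exp (-lam*(t+h)) ≤ lam * h := by
          have h3 : Real.exp (-lam*t) ≤ 1 := Real.exp_le_one_iff.mpr (by nlinarith)
          have h4 : Real.exp (-lam*(t+h)) = Real.exp (-lam*t) * Real.exp (-lam*h) := by
            rw [← Real.exp_add]; ring_nf
          have h5 : 1 - lam*h ≤ Real.exp (-lam*h) := by
            have := Real.add_one_le_exp (-lam*h); linarith
          nlinarith [Real.exp_pos (-lam*t)]
        have htα : 0 ≤ t ^ α := Real.rpow_nonneg ht0 _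
        have decomp : (t+h)^α * Real.exp (-lam*(t+h)) - t^α * Real.exp (-lam*t)
            = ((t+h)^α - t^α) * Real.exp (-lam*(t+h))
              + t^α * (Real.exp (-lam*(t+h)) - Real.exp (-lam*t)) := by ring
        rw [decomp]
        have hA : |((t+h)^α - t^α) * Real.exp (-lam*(t+h))| ≤ |(t+h)^α - t^α| := by
          rw [abs_mul, abs_of_pos e1']
          exact mul_le_of_le_one_right (abs_nonneg _) e1
        have hB : |t^α * (Real.exp (-lam*(t+h)) - Real.exp (-lam*t))| ≤ lam * h * t^α := by
          rw [abs_mul, abs_of_nonneg htα, abs_of_nonpos (by linarith)]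
          calc t^α * -(Real.exp (-lam*(t+h)) - Real.exp (-lam*t))
              ≤ t^α * (lam * h) := by
                apply mul_le_mul_of_nonneg_left _ htα; linarith
            _ = lam * h * t^α := by ring
        calc |((t+h)^α - t^α) * Real.exp (-lam*(t+h))
              + t^α * (Real.exp (-lam*(t+h)) - Real.exp (-lam*t))|
            ≤ |((t+h)^α - t^α) * Real.exp (-lam*(t+h))|
              + |t^α * (Real.exp (-lam*(t+h)) - Real.exp (-lam*t))| := abs_add_le _ _
          _ ≤ |(t+h)^α - t^α| + lam * h * t^α := by linarith
      have Idiffabs : IntervalIntegrable (fun t : ℝ => |(t+h)^α - t^α|) volume 0 T :=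
        (Iαh.sub Iα).abs
      have Irhs : IntervalIntegrable (fun t : ℝ => |(t+h)^α - t^α| + lam * h * t^α)
          volume 0 T := Idiffabs.add (Iα.const_mul _)
      have IKdiff : IntervalIntegrable (fun t => |K (t+h) - K t|) volume 0 T :=
        (IKh.sub IK).abs
      have step1 : (∫ t in (0:ℝ)..T, |K (t+h) - K t|)
          ≤ ∫ t in (0:ℝ)..T, (|(t+h)^α - t^α| + lam*h*t^α) :=
        intervalIntegral.integral_mono_on hT IKdiff Irhs hpt
      have I2 : (∫ t in (0:ℝ)..T, t ^ α) = T ^ β / β := by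
        rw [integral_rpow (Or.inl hα1), hαβ, Real.zero_rpow hβpos.ne', sub_zero]
      have I1 : (∫ t in (0:ℝ)..T, (t+h) ^ α) = ((T+h)^β - h^β)/β := by
        rw [intervalIntegral.integral_comp_add_right (fun s => s ^ α) h, zero_add,
          integral_rpow (Or.inl hα1), hαβ]
      have hTβ_le : T^β ≤ (T+h)^β := Real.rpow_le_rpow hT (by linarith) hβpos.le
      have hhβ : (0:ℝ) ≤ h^β := Real.rpow_nonneg hh.le _
      have habs0 : (0:ℝ) ≤ |(T+h)^β - T^β| := abs_nonneg _
      have hself : (T+h)^β - T^β ≤ |(T+h)^β - T^β| := le_abs_self _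
      have step2 : (∫ t in (0:ℝ)..T, |(t+h)^α - t^α|)
          ≤ (|(T+h)^β - T^β| + h^β)/β := by
        rcases le_or_gt 0 α with hα0 | hα0
        · have heq : EqOn (fun t : ℝ => |(t+h)^α - t^α|)
              (fun t : ℝ => (t+h)^α - t^α) (uIcc 0 T) := by
            intro t ht
            rw [uIcc_of_le hT] at ht
            exact abs_of_nonneg (sub_nonneg.mpr
              (Real.rpow_le_rpow ht.1 (by linarith) hα0))
          rw [intervalIntegral.integral_congr heq,
            intervalIntegral.integral_sub Iαh Iα, I1, I2]
          rw [div_sub_div_same, div_le_div_iff_of_pos_right hβpos]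
          linarith
        · have heq : ∀ᵐ t ∂volume, t ∈ Set.uIoc (0:ℝ) T →
              |(t+h)^α - t^α| = t^α - (t+h)^α := by
            refine Eventually.of_forall fun t ht => ?_
            rw [Set.uIoc_of_le hT] at ht
            have := Real.rpow_le_rpow_of_nonpos ht.1 (by linarith : t ≤ t + h) hα0.le
            rw [abs_of_nonpos (by linarith)]; ring
          rw [intervalIntegral.integral_congr_ae heq,
            intervalIntegral.integral_sub Iα Iαh, I1, I2]
          rw [show T^β/β - ((T+h)^β - h^β)/β = (T^β - (T+h)^β + h^β)/β by ring,
            div_le_div_iff_of_pos_right hβpos]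
          linarith
      have I3 : (∫ t in (0:ℝ)..T, lam*h*(t^α)) = lam*h*(T^β/β) := by
        rw [intervalIntegral.integral_const_mul, I2]
      calc (∫ t in (0:ℝ)..T, |K (t+h) - K t|)
          ≤ ∫ t in (0:ℝ)..T, (|(t+h)^α - t^α| + lam*h*t^α) := step1
        _ = (∫ t in (0:ℝ)..T, |(t+h)^α - t^α|) + ∫ t in (0:ℝ)..T, lam*h*(t^α) :=
            intervalIntegral.integral_add Idiffabs (Iα.const_mul _)
        _ ≤ (|(T+h)^β - T^β| + h^β)/β + lam*h*(T^β/β) := by rw [I3]; linarith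
        _ = (|(T+h)^β - T^β| + h^β + lam * T^β * h)/β := by ring
    -- asymptotics of the bound
    have O1 : (fun h : ℝ => (T+h)^β - T^β) =O[𝓝 (0:ℝ)] fun h : ℝ => h := by
      have h1 : HasDerivAt (fun h : ℝ => T + h) 1 0 := by
        simpa using (hasDerivAt_id (0:ℝ)).const_add T
      have hd := h1.rpow_const (p := β) (Or.inl (by positivity))
      have := hd.hasFDerivAt.isBigO_sub
      simpa using this
    have Olin : (fun h : ℝ => h) =O[𝓝[>] (0:ℝ)] fun h : ℝ => h ^ m := aux_lin_O hm1 hmpos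
    have O1' : (fun h : ℝ => |(T+h)^β - T^β|) =O[𝓝[>] (0:ℝ)] fun h : ℝ => h ^ m :=
      (isBigO_abs_left.mpr (O1.mono nhdsWithin_le_nhds)).trans Olin
    have O2 : (fun h : ℝ => h ^ β) =O[𝓝[>] (0:ℝ)] fun h : ℝ => h ^ m :=
      aux_rpow_O hmβ hmpos
    have O3 : (fun h : ℝ => lam * T^β * h) =O[𝓝[>] (0:ℝ)] fun h : ℝ => h ^ m :=
      Olin.const_mul_left _
    have hR : (fun h : ℝ => |(T+h)^β - T^β| + h^β + lam * T^β * h)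
        =O[𝓝[>] (0:ℝ)] fun h : ℝ => h ^ m := (O1'.add O2).add O3
    refine IsBigO.trans ?_ hR
    refine IsBigO.of_bound (1/β) ?_
    filter_upwards [self_mem_nhdsWithin] with h hh
    have hh : 0 < h := hh
    have hb := key h hh
    have hnn : 0 ≤ ∫ t in (0:ℝ)..T, |K (t+h) - K t| :=
      intervalIntegral.integral_nonneg hT fun x _ => abs_nonneg _
    have hRnn : 0 ≤ |(T+h)^β - T^β| + h^β + lam*T^β*h := by
      have h1 := abs_nonneg ((T+h)^β - T^β)
      have h2 := Real.rpow_nonneg hh.le β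
      have h4 : 0 ≤ lam * T^β * h :=
        mul_nonneg (mul_nonneg hlam.le (Real.rpow_nonneg hT β)) hh.le
      linarith
    rw [Real.norm_of_nonneg hnn, Real.norm_of_nonneg hRnn]
    calc (∫ t in (0:ℝ)..T, |K (t+h) - K t|)
        ≤ (|(T+h)^β - T^β| + h^β + lam * T^β * h)/β := hb
      _ = 1/β * (|(T+h)^β - T^β| + h^β + lam * T^β * h) := by ring
end

section
/- Consider the Riccati ODE system ψ'(t) = b₁ψ(t) + (a₁/2)ψ(t)², φ'(t) = b₀ψ(t) + (a₀/2)ψ(t)², with ψ(0) = u ≤ 0, φ(0) = 0, where b₁ ∈ ℝ, a₁ ≥ 0, b₀ ≥ 0, a₀ ≥ 0 and u real nonpositive. Then a unique global solution exists on [0,∞) and ψ(t) ≤ 0 for all t ≥ 0. -/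
open Set

noncomputable def riccI (b t : ℝ) : ℝ := if b = 0 then t else (Real.exp (b*t) - 1)/b

lemma riccI_zero (b : ℝ) : riccI b 0 = 0 := by
  unfold riccI; split <;> simp

lemma riccI_hasDeriv (b t : ℝ) : HasDerivAt (riccI b) (Real.exp (b*t)) t := by
  unfold riccI
  by_cases hb : b = 0
  · simp only [if_pos hb, hb, mul_zero, zero_mul, Real.exp_zero]
    exact hasDerivAt_id' t
  · simp only [if_neg hb]
    have h1 : HasDerivAt (fun t => Real.exp (b*t)) (Real.exp (b*t) * b) t :=
      (Real.hasDerivAt_exp (b*t)).comp t (by simpa using (hasDerivAt_id t).const_mul b)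
    have := (h1.sub_const 1).div_const b
    simpa [mul_div_assoc, mul_div_cancel_right₀ _ hb] using this

lemma riccI_nonneg (b t : ℝ) (ht : 0 ≤ t) : 0 ≤ riccI b t := by
  unfold riccI
  by_cases hb : b = 0
  · simpa [hb]
  · simp only [if_neg hb]
    rcases lt_or_gt_of_ne hb with h | h
    · apply div_nonneg_of_nonpos _ h.le
      exact sub_nonpos.2 (Real.exp_le_one_iff.2 (mul_nonpos_of_nonpos_of_nonneg h.le ht))
    · apply div_nonneg _ h.le
      exact sub_nonneg.2 (Real.one_le_exp_iff.2 (mul_nonneg h.le ht))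

noncomputable def riccD (b c u t : ℝ) : ℝ := 1 - c*u*riccI b t

noncomputable def riccPsi (b c u t : ℝ) : ℝ := u * Real.exp (b*t) / riccD b c u t

lemma riccD_hasDeriv (b c u t : ℝ) :
    HasDerivAt (riccD b c u) (-(c*u*Real.exp (b*t))) t := by
  exact (((riccI_hasDeriv b t).const_mul (c*u)).const_sub 1)

lemma riccD_one_le (b c u t : ℝ) (hcu : c*u ≤ 0) (ht : 0 ≤ t) : 1 ≤ riccD b c u t := by
  have := mul_nonpos_of_nonpos_of_nonneg hcu (riccI_nonneg b t ht)
  unfold riccD; linarith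

lemma riccPsi_zero (b c u : ℝ) : riccPsi b c u 0 = u := by
  simp [riccPsi, riccD, riccI_zero]

lemma riccPsi_hasDeriv (b c u t : ℝ) (hD : riccD b c u t ≠ 0) :
    HasDerivAt (riccPsi b c u) (b * riccPsi b c u t + c * (riccPsi b c u t)^2) t := by
  have hN : HasDerivAt (fun t => u * Real.exp (b*t)) (u * Real.exp (b*t) * b) t := by
    have h1 : HasDerivAt (fun t => Real.exp (b*t)) (Real.exp (b*t) * b) t :=
      (Real.hasDerivAt_exp (b*t)).comp t (by simpa using (hasDerivAt_id t).const_mul b)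
    simpa [mul_assoc] using h1.const_mul u
  have := hN.div (riccD_hasDeriv b c u t) hD
  refine this.congr_deriv ?_
  have : riccPsi b c u t = u * Real.exp (b*t) / riccD b c u t := rfl
  rw [this]
  rw [show c * u * Real.exp (b*t) = c * (u * Real.exp (b*t)) from by ring]
  generalize riccD b c u t = d at hD ⊢
  generalize u * Real.exp (b*t) = N
  field_simp
  ring

lemma riccati_lipschitz (b₁ c M : ℝ) (hc : 0 ≤ c) (hM : 0 ≤ M) :
    LipschitzOnWith (|b₁| + 2*c*M).toNNReal (fun x => b₁ * x + c * x^2) (Icc (-M) M) := by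
  rw [lipschitzOnWith_iff_dist_le_mul]
  intro x hx y hy
  rw [Real.dist_eq, Real.dist_eq, Real.coe_toNNReal _ (by positivity)]
  have h1 : b₁ * x + c * x^2 - (b₁ * y + c * y^2) = (x - y) * (b₁ + c*(x+y)) := by ring
  rw [h1, abs_mul, mul_comm]
  apply mul_le_mul_of_nonneg_right _ (abs_nonneg _)
  calc |b₁ + c*(x+y)| ≤ |b₁| + |c*(x+y)| := abs_add_le _ _
    _ ≤ |b₁| + 2*c*M := by
        rw [abs_mul, abs_of_nonneg hc]
        have hxy : |x + y| ≤ 2*M := by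
          calc |x+y| ≤ |x| + |y| := abs_add_le _ _
            _ ≤ 2*M := by
              have := abs_le.2 ⟨hx.1, hx.2⟩
              have := abs_le.2 ⟨hy.1, hy.2⟩
              linarith
        nlinarith

/-- The Riccati system `ψ' = b₁ψ + (a₁/2)ψ²`, `φ' = b₀ψ + (a₀/2)ψ²` with `ψ(0)=u ≤ 0`,
`φ(0)=0`, `a₁, b₀, a₀ ≥ 0`, admits a unique global solution on `[0,∞)`, and `ψ ≤ 0`
there. -/
theorem riccati_global_solution
    (b₀ b₁ a₀ a₁ u : ℝ) (ha₁ : 0 ≤ a₁) (hb₀ : 0 ≤ b₀) (ha₀ : 0 ≤ a₀) (hu : u ≤ 0) :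
    ∃ ψ φ : ℝ → ℝ,
      (ψ 0 = u ∧ φ 0 = 0 ∧
        (∀ t : ℝ, 0 ≤ t → HasDerivAt ψ (b₁ * ψ t + a₁ / 2 * (ψ t) ^ 2) t) ∧
        (∀ t : ℝ, 0 ≤ t → HasDerivAt φ (b₀ * ψ t + a₀ / 2 * (ψ t) ^ 2) t) ∧
        (∀ t : ℝ, 0 ≤ t → ψ t ≤ 0)) ∧
      (∀ ψ' φ' : ℝ → ℝ,
        (ψ' 0 = u ∧ φ' 0 = 0 ∧
          (∀ t : ℝ, 0 ≤ t → HasDerivAt ψ' (b₁ * ψ' t + a₁ / 2 * (ψ' t) ^ 2) t) ∧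
          (∀ t : ℝ, 0 ≤ t → HasDerivAt φ' (b₀ * ψ' t + a₀ / 2 * (ψ' t) ^ 2) t)) →
        ∀ t : ℝ, 0 ≤ t → ψ' t = ψ t ∧ φ' t = φ t) := by
  have hc0 : (0:ℝ) ≤ a₁ / 2 := by positivity
  have hcu : a₁ / 2 * u ≤ 0 := mul_nonpos_of_nonneg_of_nonpos hc0 hu
  set c := a₁ / 2 with hc
  set ψ : ℝ → ℝ := riccPsi b₁ c u with hψdef
  have hDpos : ∀ t : ℝ, 0 ≤ t → (0:ℝ) < riccD b₁ c u t := fun t ht =>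
    zero_lt_one.trans_le (riccD_one_le _ _ _ _ hcu ht)
  have hDne : ∀ t : ℝ, 0 ≤ t → riccD b₁ c u t ≠ 0 := fun t ht => (hDpos t ht).ne'
  have hψ0 : ψ 0 = u := riccPsi_zero _ _ _
  have hψd : ∀ t : ℝ, 0 ≤ t → HasDerivAt ψ (b₁ * ψ t + c * (ψ t)^2) t := fun t ht =>
    riccPsi_hasDeriv _ _ _ _ (hDne t ht)
  have hψneg : ∀ t : ℝ, 0 ≤ t → ψ t ≤ 0 := by
    intro t ht
    have : u * Real.exp (b₁*t) ≤ 0 :=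
      mul_nonpos_of_nonpos_of_nonneg hu (Real.exp_pos _).le
    exact div_nonpos_of_nonpos_of_nonneg this (hDpos t ht).le
  -- the open set where ψ is nice
  set U : Set ℝ := {t | riccD b₁ c u t ≠ 0} with hUdef
  have hDcont : Continuous (riccD b₁ c u) :=
    continuous_iff_continuousAt.2 fun t => (riccD_hasDeriv b₁ c u t).continuousAt
  have hUopen : IsOpen U := isOpen_compl_singleton.preimage hDcont
  have hIccU : ∀ t : ℝ, 0 ≤ t → Icc 0 t ⊆ U := fun t ht s hs => hDne s hs.1
  have hψcontU : ∀ t ∈ U, ContinuousAt ψ t := fun t ht =>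
    (riccPsi_hasDeriv b₁ c u t ht).continuousAt
  set f : ℝ → ℝ := fun s => b₀ * ψ s + a₀ / 2 * (ψ s)^2 with hfdef
  have hfcont : ∀ t ∈ U, ContinuousAt f t := fun t ht =>
    (continuousAt_const.mul (hψcontU t ht)).add
      (continuousAt_const.mul ((hψcontU t ht).pow 2))
  set φ : ℝ → ℝ := fun t => ∫ s in (0:ℝ)..t, f s with hφdef
  have hφ0 : φ 0 = 0 := intervalIntegral.integral_same
  have hφd : ∀ t : ℝ, 0 ≤ t → HasDerivAt φ (f t) t := by
    intro t ht
    apply intervalIntegral.integral_hasDerivAt_right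
    · apply ContinuousOn.intervalIntegrable
      rw [uIcc_of_le ht]
      exact continuousOn_of_forall_continuousAt fun s hs => hfcont s (hIccU t ht hs)
    · exact ContinuousAt.stronglyMeasurableAtFilter hUopen hfcont t (hDne t ht)
    · exact hfcont t (hDne t ht)
  refine ⟨ψ, φ, ⟨hψ0, hφ0, hψd, hφd, hψneg⟩, ?_⟩
  rintro ψ' φ' ⟨hψ'0, hφ'0, hψ'd, hφ'd⟩ t ht
  -- uniqueness of ψ on [0, t]
  have hψcont : ContinuousOn ψ (Icc 0 t) :=
    continuousOn_of_forall_continuousAt fun s hs => hψcontU s (hIccU t ht hs)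
  have hψ'cont : ContinuousOn ψ' (Icc 0 t) :=
    continuousOn_of_forall_continuousAt fun s hs => (hψ'd s hs.1).continuousAt
  obtain ⟨M₁, hM₁⟩ := isCompact_Icc.exists_bound_of_continuousOn hψcont
  obtain ⟨M₂, hM₂⟩ := isCompact_Icc.exists_bound_of_continuousOn hψ'cont
  set M : ℝ := max M₁ M₂ with hMdef
  have hM0 : 0 ≤ M := le_trans (norm_nonneg (ψ 0)) (le_trans (hM₁ 0 ⟨le_refl 0, ht⟩) (le_max_left _ _))
  have hmemψ : ∀ s ∈ Icc (0:ℝ) t, ψ s ∈ Icc (-M) M := by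
    intro s hs
    have := le_trans (hM₁ s hs) (le_max_left M₁ M₂)
    rw [Real.norm_eq_abs] at this
    exact abs_le.1 this
  have hmemψ' : ∀ s ∈ Icc (0:ℝ) t, ψ' s ∈ Icc (-M) M := by
    intro s hs
    have := le_trans (hM₂ s hs) (le_max_right M₁ M₂)
    rw [Real.norm_eq_abs] at this
    exact abs_le.1 this
  have hlip : ∀ τ : ℝ, LipschitzOnWith (|b₁| + 2*c*M).toNNReal
      (fun x => b₁ * x + c * x^2) (Icc (-M) M) := fun _ =>
    riccati_lipschitz b₁ c M hc0 hM0
  have key : EqOn ψ' ψ (Icc 0 t) := by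
    apply ODE_solution_unique_of_mem_Icc_right
      (v := fun _ x => b₁ * x + c * x^2) (s := fun _ => Icc (-M) M) (fun τ _ => hlip τ)
      hψ'cont (fun s hs => (hψ'd s hs.1).hasDerivWithinAt)
      (fun s hs => hmemψ' s (Ico_subset_Icc_self hs))
      hψcont (fun s hs => (hψd s hs.1).hasDerivWithinAt)
      (fun s hs => hmemψ s (Ico_subset_Icc_self hs))
    rw [hψ'0, hψ0]
  refine ⟨key ⟨ht, le_refl t⟩, ?_⟩
  -- uniqueness of φ on [0, t]
  have hφcont : ContinuousOn φ (Icc 0 t) :=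
    continuousOn_of_forall_continuousAt fun s hs => (hφd s hs.1).continuousAt
  have hφ'cont : ContinuousOn φ' (Icc 0 t) :=
    continuousOn_of_forall_continuousAt fun s hs => (hφ'd s hs.1).continuousAt
  have derivφ' : ∀ s ∈ Ico (0:ℝ) t, HasDerivWithinAt φ' (f s) (Ici s) s := by
    intro s hs
    have h := (hφ'd s hs.1).hasDerivWithinAt (s := Ici s)
    rwa [key (Ico_subset_Icc_self hs)] at h
  exact eq_of_has_deriv_right_eq derivφ'
    (fun s hs => (hφd s hs.1).hasDerivWithinAt) hφ'cont hφcont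
    (by rw [hφ'0, hφ0]) t ⟨ht, le_refl t⟩
end
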